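/- Let a < b be real numbers and let f : ℝ → ℝ be twice differentiable on an open interval containing [a,b] with f'' Lebesgue integrable on [a,b]. Let q ≥ 1. If the function x ↦ |f''(x)|^q is convex on [a,b], then |(1/(b−a))·∫_a^b f(x) dx − f((a+b)/2)| ≤ ((b−a)²/48) · ( ((3·|f''(a)|^q + 5·|f''(b)|^q)/8)^(1/q) + ((5·|f''(a)|^q + 3·|f''(b)|^q)/8)^(1/q) ). -/

import Mathlib

/-!
Taylor's formula with integral remainder, applied on each half of `[a, b]` with `m = (a + b) / 2`,
gives `∫ₐᵇ f - (b - a) f(m) = ∫ₐᵐ (x - a)²/2 f'' + ∫ₘᵇ (x - b)²/2 f''`.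
On each half, Hölder's inequality for the weight `w = (x - a)²/2` (resp. `(x - b)²/2`) bounds the
integral by `(∫ w) ^ (1 - 1/q) (∫ w |f''| ^ q) ^ (1/q)`, and convexity bounds `|f''| ^ q` by its
chord through `(a, |f'' a| ^ q)` and `(b, |f'' b| ^ q)`. The resulting polynomial integrals produce
the constants `(b - a)³/48`, `(5, 3)/8` and `(3, 5)/8`.
-/

open MeasureTheory intervalIntegral Set

section Holder

variable {α : Type*} [MeasurableSpace α] {μ : Measure α}

theorem memLp_rpow_inv_of_integrable {f : α → ℝ} {p : ℝ} (hp : 0 < p) (hf0 : 0 ≤ᵐ[μ] f)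
    (hf : Integrable f μ) : MemLp (fun x => f x ^ p⁻¹) (ENNReal.ofReal p) μ := by
  have hmeas : AEStronglyMeasurable (fun x => f x ^ p⁻¹) μ :=
    (hf.aemeasurable.pow_const _).aestronglyMeasurable
  refine (memLp_norm_rpow_iff hmeas (ENNReal.ofReal_pos.2 hp).ne' ENNReal.ofReal_ne_top).1 ?_
  rw [ENNReal.div_self (ENNReal.ofReal_pos.2 hp).ne' ENNReal.ofReal_ne_top,
    memLp_one_iff_integrable, ENNReal.toReal_ofReal hp.le]
  refine hf.congr (hf0.mono fun x hx => ?_)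
  simp only [Real.norm_of_nonneg (Real.rpow_nonneg hx _), Real.rpow_inv_rpow hx hp.ne']

theorem integral_mul_rpow_inv_le {w g : α → ℝ} {q : ℝ} (hq : 1 ≤ q) (hw0 : 0 ≤ᵐ[μ] w)
    (hg0 : 0 ≤ᵐ[μ] g) (hw : Integrable w μ) (hwg : Integrable (fun x => w x * g x) μ) :
    ∫ x, w x * g x ^ q⁻¹ ∂μ ≤ (∫ x, w x ∂μ) ^ (1 - q⁻¹) * (∫ x, w x * g x ∂μ) ^ q⁻¹ := by
  rcases hq.eq_or_lt with rfl | hq1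
  · simp
  set p := q.conjExponent
  have hpq : p.HolderConjugate q := (Real.HolderConjugate.conjExponent hq1).symm
  have hwg0 : 0 ≤ᵐ[μ] fun x => w x * g x := by
    filter_upwards [hw0, hg0] with x hw hg using mul_nonneg hw hg
  -- Hölder for `w ^ (1/p)` and `(w g) ^ (1/q)`, whose product is `w g ^ (1/q)` as `1/p + 1/q = 1`.
  have holder := integral_mul_le_Lp_mul_Lq_of_nonneg hpq
    (hw0.mono fun x hx => Real.rpow_nonneg hx p⁻¹) (hwg0.mono fun x hx => Real.rpow_nonneg hx q⁻¹)
    (memLp_rpow_inv_of_integrable hpq.pos hw0 hw)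
    (memLp_rpow_inv_of_integrable hpq.symm.pos hwg0 hwg)
  have hp_inv : p⁻¹ = 1 - q⁻¹ := by linarith [hpq.inv_add_inv_eq_one]
  have hprod : ∫ x, w x ^ p⁻¹ * (w x * g x) ^ q⁻¹ ∂μ = ∫ x, w x * g x ^ q⁻¹ ∂μ := by
    refine integral_congr_ae ?_
    filter_upwards [hw0, hg0] with x hw hg
    rw [Real.mul_rpow hw hg, ← mul_assoc, ← Real.rpow_add' hw (by simp [hpq.inv_add_inv_eq_one]),
      hpq.inv_add_inv_eq_one, Real.rpow_one]
  have hw_pow : ∫ x, (w x ^ p⁻¹) ^ p ∂μ = ∫ x, w x ∂μ :=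
    integral_congr_ae (hw0.mono fun x hx => Real.rpow_inv_rpow hx hpq.ne_zero)
  have hwg_pow : ∫ x, ((w x * g x) ^ q⁻¹) ^ q ∂μ = ∫ x, w x * g x ∂μ :=
    integral_congr_ae (hwg0.mono fun x hx => Real.rpow_inv_rpow hx hpq.symm.ne_zero)
  rwa [hprod, hw_pow, hwg_pow, one_div, one_div, hp_inv] at holder

end Holder

theorem ConvexOn.le_chord {φ : ℝ → ℝ} {a b x : ℝ} (hφ : ConvexOn ℝ (Icc a b) φ) (hab : a < b)
    (hx : x ∈ Icc a b) : φ x ≤ ((b - x) * φ a + (x - a) * φ b) / (b - a) := by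
  have hba : 0 < b - a := sub_pos.2 hab
  have key := hφ.2 (left_mem_Icc.2 hab.le) (right_mem_Icc.2 hab.le)
    (div_nonneg (sub_nonneg.2 hx.2) hba.le) (div_nonneg (sub_nonneg.2 hx.1) hba.le)
    (by field_simp; ring)
  have hx_eq : (b - x) / (b - a) * a + (x - a) / (b - a) * b = x := by
    field_simp; ring
  simp only [smul_eq_mul, hx_eq] at key
  calc φ x ≤ (b - x) / (b - a) * φ a + (x - a) / (b - a) * φ b := key
    _ = _ := by field_simp

theorem rpow_one_sub_mul_mul_rpow {W c : ℝ} (hW : 0 ≤ W) (hc : 0 ≤ c) (s : ℝ) :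
    W ^ (1 - s) * (W * c) ^ s = W * c ^ s := by
  rw [Real.mul_rpow hW hc, ← mul_assoc, ← Real.rpow_add' hW (by norm_num), sub_add_cancel,
    Real.rpow_one]

theorem integral_sq_sub_mul_second_deriv {f f' f'' : ℝ → ℝ} {c d : ℝ} (p : ℝ)
    (hf : ∀ x ∈ uIcc c d, HasDerivAt f (f' x) x) (hf' : ∀ x ∈ uIcc c d, HasDerivAt f' (f'' x) x)
    (hf'' : IntervalIntegrable f'' volume c d) :
    ∫ x in c..d, (x - p) ^ 2 / 2 * f'' x =
      ((d - p) ^ 2 / 2 * f' d - (d - p) * f d) - ((c - p) ^ 2 / 2 * f' c - (c - p) * f c)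
        + ∫ x in c..d, f x := by
  have hfc : ContinuousOn f (uIcc c d) := fun x hx => (hf x hx).continuousAt.continuousWithinAt
  have hker : IntervalIntegrable (fun x => (x - p) ^ 2 / 2 * f'' x) volume c d :=
    hf''.continuousOn_mul (by fun_prop)
  have hderiv : ∀ x ∈ uIcc c d, HasDerivAt (fun y => (y - p) ^ 2 / 2 * f' y - (y - p) * f y)
      ((x - p) ^ 2 / 2 * f'' x - f x) x := by
    intro x hx
    have hsq : HasDerivAt (fun y => (y - p) ^ 2 / 2) (x - p) x := by
      simpa using (((hasDerivAt_id x).sub_const p).pow 2).div_const 2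
    have hlin : HasDerivAt (fun y => y - p) 1 x := (hasDerivAt_id x).sub_const p
    exact ((hsq.fun_mul (hf' x hx)).fun_sub (hlin.fun_mul (hf x hx))).congr_deriv (by ring)
  rw [← sub_eq_iff_eq_add, ← intervalIntegral.integral_sub hker hfc.intervalIntegrable,
    integral_eq_sub_of_hasDerivAt hderiv (hker.sub hfc.intervalIntegrable)]

theorem integral_sub_mul_midpoint_eq {f f' f'' : ℝ → ℝ} {a b : ℝ}
    (hf : ∀ x ∈ uIcc a b, HasDerivAt f (f' x) x) (hf' : ∀ x ∈ uIcc a b, HasDerivAt f' (f'' x) x)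
    (hf'' : IntervalIntegrable f'' volume a b) :
    (∫ x in a..b, f x) - (b - a) * f ((a + b) / 2) =
      (∫ x in a..(a + b) / 2, (x - a) ^ 2 / 2 * f'' x)
        + ∫ x in (a + b) / 2..b, (x - b) ^ 2 / 2 * f'' x := by
  have hm : (a + b) / 2 ∈ uIcc a b := by
    rcases le_total a b with h | h
    · exact uIcc_of_le h ▸ ⟨by linarith, by linarith⟩
    · exact uIcc_of_ge h ▸ ⟨by linarith, by linarith⟩
  have hleft : uIcc a ((a + b) / 2) ⊆ uIcc a b := uIcc_subset_uIcc left_mem_uIcc hm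
  have hright : uIcc ((a + b) / 2) b ⊆ uIcc a b := uIcc_subset_uIcc hm right_mem_uIcc
  have hfc : ContinuousOn f (uIcc a b) := fun x hx => (hf x hx).continuousAt.continuousWithinAt
  rw [integral_sq_sub_mul_second_deriv a (fun x hx => hf x (hleft hx))
      (fun x hx => hf' x (hleft hx)) (hf''.mono_set hleft),
    integral_sq_sub_mul_second_deriv b (fun x hx => hf x (hright hx))
      (fun x hx => hf' x (hright hx)) (hf''.mono_set hright),
    ← integral_add_adjacent_intervals ((hfc.mono hleft).intervalIntegrable)
      ((hfc.mono hright).intervalIntegrable)]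
  ring

theorem abs_intervalIntegral_mul_le {c d q : ℝ} (hcd : c ≤ d) (hq : 1 ≤ q) {w h l : ℝ → ℝ}
    (hw : ContinuousOn w (Icc c d)) (hl : ContinuousOn l (Icc c d))
    (hw0 : ∀ x ∈ Icc c d, 0 ≤ w x) (hh : IntervalIntegrable h volume c d)
    (hhl : ∀ x ∈ Icc c d, |h x| ^ q ≤ l x) :
    |∫ x in c..d, w x * h x| ≤
      (∫ x in c..d, w x) ^ (1 - q⁻¹) * (∫ x in c..d, w x * l x) ^ q⁻¹ := by
  have hq0 : 0 < q := zero_lt_one.trans_le hq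
  have hl0 : ∀ x ∈ Icc c d, 0 ≤ l x := fun x hx =>
    (Real.rpow_nonneg (abs_nonneg _) q).trans (hhl x hx)
  have hh_le : ∀ x ∈ Icc c d, |h x| ≤ l x ^ q⁻¹ := fun x hx => by
    simpa [Real.rpow_rpow_inv (abs_nonneg (h x)) hq0.ne'] using
      Real.rpow_le_rpow (Real.rpow_nonneg (abs_nonneg _) q) (hhl x hx) (inv_nonneg.2 hq0.le)
  rw [← uIcc_of_le hcd] at hw hl
  have hwl : ContinuousOn (fun x => w x * l x ^ q⁻¹) (uIcc c d) :=
    hw.mul (hl.rpow_const fun _ _ => Or.inr (inv_nonneg.2 hq0.le))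
  have hμ : ∀ᵐ x ∂volume.restrict (Ioc c d), x ∈ Icc c d :=
    (ae_restrict_mem measurableSet_Ioc).mono fun x hx => Ioc_subset_Icc_self hx
  calc |∫ x in c..d, w x * h x|
      ≤ ∫ x in c..d, |w x * h x| := abs_integral_le_integral_abs hcd
    _ ≤ ∫ x in c..d, w x * l x ^ q⁻¹ := by
        refine integral_mono_on hcd (hh.continuousOn_mul hw).abs hwl.intervalIntegrable
          fun x hx => ?_
        rw [abs_mul, abs_of_nonneg (hw0 x hx)]
        exact mul_le_mul_of_nonneg_left (hh_le x hx) (hw0 x hx)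
    _ ≤ _ := by
        simp only [integral_of_le hcd]
        exact integral_mul_rpow_inv_le hq (hμ.mono fun x hx => hw0 x hx)
          (hμ.mono fun x hx => hl0 x hx) (hw.intervalIntegrable.1)
          ((hw.mul hl).intervalIntegrable.1)

theorem integral_sq_sub_left_half_mul_chord {a b A B : ℝ} (hab : a < b) :
    ∫ x in a..(a + b) / 2, (x - a) ^ 2 / 2 * (((b - x) * A + (x - a) * B) / (b - a)) =
      (b - a) ^ 3 / 48 * ((5 * A + 3 * B) / 8) := by
  have hba : b - a ≠ 0 := by linarith
  have hexpand : ∀ x, (x - a) ^ 2 / 2 * (((b - x) * A + (x - a) * B) / (b - a)) =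
      A / 2 * (x - a) ^ 2 + (B - A) / (2 * (b - a)) * (x - a) ^ 3 := fun x => by
    field_simp; ring
  simp_rw [hexpand]
  rw [integral_add (Continuous.intervalIntegrable (by fun_prop) _ _)
    (Continuous.intervalIntegrable (by fun_prop) _ _)]
  simp [integral_comp_sub_right fun x => x ^ 2, integral_comp_sub_right fun x => x ^ 3]
  field_simp; ring

theorem integral_sq_sub_right_half_mul_chord {a b A B : ℝ} (hab : a < b) :
    ∫ x in (a + b) / 2..b, (x - b) ^ 2 / 2 * (((b - x) * A + (x - a) * B) / (b - a)) =
      (b - a) ^ 3 / 48 * ((3 * A + 5 * B) / 8) := by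
  have hba : b - a ≠ 0 := by linarith
  have hexpand : ∀ x, (x - b) ^ 2 / 2 * (((b - x) * A + (x - a) * B) / (b - a)) =
      B / 2 * (x - b) ^ 2 + (B - A) / (2 * (b - a)) * (x - b) ^ 3 := fun x => by
    field_simp; ring
  simp_rw [hexpand]
  rw [integral_add (Continuous.intervalIntegrable (by fun_prop) _ _)
    (Continuous.intervalIntegrable (by fun_prop) _ _)]
  simp [integral_comp_sub_right fun x => x ^ 2, integral_comp_sub_right fun x => x ^ 3]
  field_simp; ring

theorem integral_sq_sub_left_half (a b : ℝ) :
    ∫ x in a..(a + b) / 2, (x - a) ^ 2 / 2 = (b - a) ^ 3 / 48 := by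
  simp [integral_comp_sub_right fun x => x ^ 2 / 2]
  ring

theorem integral_sq_sub_right_half (a b : ℝ) :
    ∫ x in (a + b) / 2..b, (x - b) ^ 2 / 2 = (b - a) ^ 3 / 48 := by
  simp [integral_comp_sub_right fun x => x ^ 2 / 2]
  ring

theorem abs_integral_sq_sub_left_half_mul_le {φ : ℝ → ℝ} {a b q A B : ℝ} (hab : a < b) (hq : 1 ≤ q)
    (hA : 0 ≤ A) (hB : 0 ≤ B) (hφ : IntervalIntegrable φ volume a b)
    (hchord : ∀ x ∈ Icc a b, |φ x| ^ q ≤ ((b - x) * A + (x - a) * B) / (b - a)) :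
    |∫ x in a..(a + b) / 2, (x - a) ^ 2 / 2 * φ x| ≤
      (b - a) ^ 3 / 48 * ((5 * A + 3 * B) / 8) ^ q⁻¹ := by
  have ham : a ≤ (a + b) / 2 := by linarith
  have hsub : Icc a ((a + b) / 2) ⊆ Icc a b := Icc_subset_Icc_right (by linarith)
  have h := abs_intervalIntegral_mul_le (w := fun x => (x - a) ^ 2 / 2) ham hq
    (by fun_prop) (by fun_prop) (fun x _ => by positivity)
    (hφ.mono_set (by rw [uIcc_of_le hab.le, uIcc_of_le ham]; exact hsub))
    (fun x hx => hchord x (hsub hx))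
  rwa [integral_sq_sub_left_half, integral_sq_sub_left_half_mul_chord hab,
    rpow_one_sub_mul_mul_rpow (by have := sub_nonneg.2 hab.le; positivity) (by positivity)] at h

theorem abs_integral_sq_sub_right_half_mul_le {φ : ℝ → ℝ} {a b q A B : ℝ} (hab : a < b) (hq : 1 ≤ q)
    (hA : 0 ≤ A) (hB : 0 ≤ B) (hφ : IntervalIntegrable φ volume a b)
    (hchord : ∀ x ∈ Icc a b, |φ x| ^ q ≤ ((b - x) * A + (x - a) * B) / (b - a)) :
    |∫ x in (a + b) / 2..b, (x - b) ^ 2 / 2 * φ x| ≤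
      (b - a) ^ 3 / 48 * ((3 * A + 5 * B) / 8) ^ q⁻¹ := by
  have hmb : (a + b) / 2 ≤ b := by linarith
  have hsub : Icc ((a + b) / 2) b ⊆ Icc a b := Icc_subset_Icc_left (by linarith)
  have h := abs_intervalIntegral_mul_le (w := fun x => (x - b) ^ 2 / 2) hmb hq
    (by fun_prop) (by fun_prop) (fun x _ => by positivity)
    (hφ.mono_set (by rw [uIcc_of_le hab.le, uIcc_of_le hmb]; exact hsub))
    (fun x hx => hchord x (hsub hx))
  rwa [integral_sq_sub_right_half, integral_sq_sub_right_half_mul_chord hab,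
    rpow_one_sub_mul_mul_rpow (by have := sub_nonneg.2 hab.le; positivity) (by positivity)] at h

/-- Corollary: midpoint power-mean-type inequality for |f''|^q convex, q ≥ 1. -/
theorem stmt_8 (f f' f'' : ℝ → ℝ) (a b u v q : ℝ) (hab : a < b)
(hua : u < a) (hbv : b < v)
    (hf' : ∀ x ∈ Set.Ioo u v, HasDerivAt f (f' x) x)
    (hf'' : ∀ x ∈ Set.Ioo u v, HasDerivAt f' (f'' x) x)
    (hint : IntervalIntegrable f'' MeasureTheory.volume a b)
    (hq : 1 ≤ q)
    (hconv : ConvexOn ℝ (Set.Icc a b) (fun x => |f'' x| ^ q)) :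
    |(1 / (b - a)) * (∫ x in a..b, f x) - f ((a + b) / 2)|
      ≤ ((b - a) ^ 2 / 48) *
          (((3 * |f'' a| ^ q + 5 * |f'' b| ^ q) / 8) ^ (1 / q)
            + ((5 * |f'' a| ^ q + 3 * |f'' b| ^ q) / 8) ^ (1 / q)) := by
  have hba : 0 < b - a := sub_pos.2 hab
  have hsub : uIcc a b ⊆ Ioo u v := by
    rw [uIcc_of_le hab.le]; exact Icc_subset_Ioo hua hbv
  have hchord := fun x (hx : x ∈ Icc a b) => hconv.le_chord hab hx
  have hleft :=
    abs_integral_sq_sub_left_half_mul_le hab hq (by positivity) (by positivity) hint hchord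
  have hright :=
    abs_integral_sq_sub_right_half_mul_le hab hq (by positivity) (by positivity) hint hchord
  have hmid := integral_sub_mul_midpoint_eq (fun x hx => hf' x (hsub hx))
    (fun x hx => hf'' x (hsub hx)) hint
  calc |(1 / (b - a)) * (∫ x in a..b, f x) - f ((a + b) / 2)|
      = |1 / (b - a) * ((∫ x in a..b, f x) - (b - a) * f ((a + b) / 2))| := by
        congr 1; field_simp
    _ = 1 / (b - a) * |(∫ x in a..b, f x) - (b - a) * f ((a + b) / 2)| := by
        rw [abs_mul, abs_of_pos (one_div_pos.2 hba)]
    _ ≤ 1 / (b - a) * ((b - a) ^ 3 / 48 * ((5 * |f'' a| ^ q + 3 * |f'' b| ^ q) / 8) ^ q⁻¹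
          + (b - a) ^ 3 / 48 * ((3 * |f'' a| ^ q + 5 * |f'' b| ^ q) / 8) ^ q⁻¹) := by
        rw [hmid]; gcongr; exact (abs_add_le _ _).trans (add_le_add hleft hright)
    _ = _ := by rw [one_div q]; field_simp; ring
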